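/- arXiv:math/0511109 — 7 statements merged into one kernel-verified Lean document; each statement's English description precedes it below -/
import Mathlib

section
/- Let G be a group acting on a topological space Z such that every element of G acts as a homeomorphism of Z. Let Q be a subset of Z and suppose that every point of Q admits an open neighborhood contained in the semistable set S_G(Q). Then S_G(Q) is open in Z. -/
/-- The semistable set of a subset `Q` with respect to a group action:
points whose orbit closure meets `Q`. -/
theorem semistable_set_isOpen
    {G Z : Type*} [Group G] [TopologicalSpace Z] [MulAction G Z]
    (hcont : ∀ g : G, Continuous (fun z : Z => g • z))
    (Q : Set Z)
    (hnbhd : ∀ q ∈ Q, ∃ U : Set Z, IsOpen U ∧ q ∈ U ∧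
      U ⊆ {z : Z | (closure (MulAction.orbit G z) ∩ Q).Nonempty}) :
    IsOpen {z : Z | (closure (MulAction.orbit G z) ∩ Q).Nonempty} := by
  rw [isOpen_iff_forall_mem_open]
  rintro z ⟨q, hqc, hqQ⟩
  obtain ⟨U, hUo, hqU, hUS⟩ := hnbhd q hqQ
  -- U meets the orbit of z since q is in its closure
  obtain ⟨y, hyU, g, rfl⟩ := mem_closure_iff.mp hqc U hUo hqU
  refine ⟨(fun w : Z => g • w) ⁻¹' U, ?_, hUo.preimage (hcont g), hyU⟩
  intro w hw
  have := hUS hw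
  simpa [MulAction.orbit_smul] using this
end

section
/- With u₁ := k ∩ ip (intersection of real subspaces of L), one has g ∩ ig = u₁ + i·u₁, and moreover u₁ ∩ i·u₁ = 0, so that g ∩ ig is the direct sum u₁ ⊕ i·u₁ (that is, g ∩ ig is the complexification of u₁). -/
/-- Let `L` be a finite-dimensional complex Lie algebra, `u` a real subalgebra with
`L = u ⊕ i·u`, and `k ⊆ u`, `p ⊆ i·u` real subspaces such that `g := k + p` is a real
Lie subalgebra.  With `u₁ := k ∩ i·p` one has `g ∩ i·g = u₁ + i·u₁` and `u₁ ∩ i·u₁ = 0`,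
i.e. `g ∩ i·g` is the complexification `u₁ ⊕ i·u₁` of `u₁`. -/
theorem inf_smul_I_eq_complexification
    {L : Type*} [LieRing L] [LieAlgebra ℂ L] [FiniteDimensional ℂ L]
    [Module ℝ L] [IsScalarTower ℝ ℂ L]
    (J : L →ₗ[ℝ] L) (hJ : ∀ x : L, J x = Complex.I • x)
    (u k p : Submodule ℝ L)
    (hu : ∀ x ∈ u, ∀ y ∈ u, ⁅x, y⁆ ∈ u)
    (huspan : u ⊔ u.map J = ⊤) (hudisj : u ⊓ u.map J = ⊥)
    (hk : k ≤ u) (hp : p ≤ u.map J)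
    (hg : ∀ x ∈ k ⊔ p, ∀ y ∈ k ⊔ p, ⁅x, y⁆ ∈ k ⊔ p) :
    (k ⊔ p) ⊓ (k ⊔ p).map J = (k ⊓ p.map J) ⊔ (k ⊓ p.map J).map J ∧
      (k ⊓ p.map J) ⊓ (k ⊓ p.map J).map J = ⊥ := by
  have hJJ : ∀ x, J (J x) = -x := fun x => by
    rw [hJ, hJ, smul_smul, Complex.I_mul_I, neg_one_smul]
  have hmm : ∀ s : Submodule ℝ L, (s.map J).map J = s := by
    intro s
    ext x
    simp only [Submodule.mem_map]
    constructor
    · rintro ⟨y, ⟨z, hz, rfl⟩, rfl⟩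
      rw [hJJ]; exact s.neg_mem hz
    · intro hx
      exact ⟨J (-x), ⟨-x, s.neg_mem hx, rfl⟩, by rw [hJJ, neg_neg]⟩
  constructor
  · apply le_antisymm
    · rintro x ⟨hx1, hx2⟩
      rw [Submodule.map_sup] at hx2
      obtain ⟨a, ha, b, hb, hab⟩ := Submodule.mem_sup.mp hx1
      obtain ⟨c, hc, d, hd, hcd⟩ := Submodule.mem_sup.mp hx2
      have heq : a - d = c - b := by
        rw [sub_eq_sub_iff_add_eq_add, hab]; exact hcd.symm
      have hd_u : d ∈ u := by
        have h1 : p.map J ≤ (u.map J).map J := Submodule.map_mono hp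
        rw [hmm] at h1
        exact h1 hd
      have hkey : a - d ∈ u ⊓ u.map J := by
        refine ⟨u.sub_mem (hk ha) hd_u, ?_⟩
        rw [heq]
        exact (u.map J).sub_mem (Submodule.map_mono hk hc) (hp hb)
      rw [hudisj, Submodule.mem_bot, sub_eq_zero] at hkey
      have hcb : c = b := by
        have h2 := heq
        rw [hkey, sub_self, eq_comm, sub_eq_zero] at h2
        exact h2
      have ha1 : a ∈ k ⊓ p.map J := ⟨ha, hkey ▸ hd⟩
      have hb1 : b ∈ (k ⊓ p.map J).map J := by
        obtain ⟨e, he, hbe⟩ := hcb ▸ hc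
        refine ⟨e, ⟨he, ?_⟩, hbe⟩
        have h3 : J b ∈ p.map J := Submodule.mem_map_of_mem hb
        rw [← hbe, hJJ] at h3
        exact (p.map J).neg_mem_iff.mp h3
      rw [← hab]
      exact Submodule.add_mem_sup ha1 hb1
    · apply sup_le
      · exact le_inf (inf_le_left.trans le_sup_left)
          (inf_le_right.trans (Submodule.map_mono le_sup_right))
      · refine le_inf ?_ (Submodule.map_mono (inf_le_left.trans le_sup_left))
        have h4 : (k ⊓ p.map J).map J ≤ (p.map J).map J := Submodule.map_mono inf_le_right
        rw [hmm] at h4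
        exact h4.trans le_sup_right
  · apply le_antisymm _ bot_le
    calc (k ⊓ p.map J) ⊓ (k ⊓ p.map J).map J
        ≤ u ⊓ u.map J :=
          inf_le_inf (inf_le_left.trans hk) (Submodule.map_mono (inf_le_left.trans hk))
      _ = ⊥ := hudisj
end

section
/- Assume that g ∩ ig is an ideal of L (viewed as a real Lie algebra). Then u₁ := k ∩ ip is an ideal of the real Lie algebra u. -/
/-- Let `L` be a finite-dimensional complex Lie algebra, `u` a real subalgebra with
`L = u ⊕ i·u`, and `k ⊆ u`, `p ⊆ i·u` real subspaces such that `g := k + p` is a real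
Lie subalgebra.  If `g ∩ i·g` is an ideal of `L` (as a real Lie algebra), then
`u₁ := k ∩ i·p` is an ideal of the real Lie algebra `u`. -/
theorem inter_smul_I_isIdeal
    {L : Type*} [LieRing L] [LieAlgebra ℂ L] [FiniteDimensional ℂ L]
    [Module ℝ L] [IsScalarTower ℝ ℂ L]
    (J : L →ₗ[ℝ] L) (hJ : ∀ x : L, J x = Complex.I • x)
    (u k p : Submodule ℝ L)
    (hu : ∀ x ∈ u, ∀ y ∈ u, ⁅x, y⁆ ∈ u)
    (huspan : u ⊔ u.map J = ⊤) (hudisj : u ⊓ u.map J = ⊥)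
    (hk : k ≤ u) (hp : p ≤ u.map J)
    (hg : ∀ x ∈ k ⊔ p, ∀ y ∈ k ⊔ p, ⁅x, y⁆ ∈ k ⊔ p)
    (hideal : ∀ x : L, ∀ y ∈ (k ⊔ p) ⊓ (k ⊔ p).map J, ⁅x, y⁆ ∈ (k ⊔ p) ⊓ (k ⊔ p).map J) :
    ∀ x ∈ u, ∀ y ∈ k ⊓ p.map J, ⁅x, y⁆ ∈ k ⊓ p.map J := by
  intro x hx y hy
  obtain ⟨hyk, hyJp⟩ := hy
  have hyg : y ∈ (k ⊔ p) ⊓ (k ⊔ p).map J := by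
    refine ⟨Submodule.mem_sup_left hyk, ?_⟩
    obtain ⟨z, hz, hzy⟩ := hyJp
    exact ⟨z, Submodule.mem_sup_right hz, hzy⟩
  obtain ⟨hwg, hwJg⟩ := hideal x y hyg
  have hwu : ⁅x, y⁆ ∈ u := hu x hx y (hk hyk)
  set w := ⁅x, y⁆ with hwdef
  -- w ∈ k
  obtain ⟨a, ha, b, hb, hab⟩ := Submodule.mem_sup.mp hwg
  have hbu : b ∈ u := by
    have hbe : b = w - a := by rw [← hab]; abel
    rw [hbe]; exact u.sub_mem hwu (hk ha)
  have hb0 : b = 0 := by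
    have : b ∈ u ⊓ u.map J := ⟨hbu, hp hb⟩
    rwa [hudisj, Submodule.mem_bot] at this
  have hwk : w ∈ k := by rw [← hab, hb0, add_zero]; exact ha
  -- w ∈ p.map J
  obtain ⟨v, hv, hvw⟩ := hwJg
  obtain ⟨c, hc, d, hd, hcd⟩ := Submodule.mem_sup.mp hv
  obtain ⟨e, he, hed⟩ := hp hd
  have hJd : J d ∈ u := by
    rw [← hed, hJ, hJ, smul_smul, Complex.I_mul_I, neg_one_smul]
    exact u.neg_mem he
  have hJc_u : J c ∈ u := by
    have hce : J c = w - J d := by rw [← hvw, ← hcd, map_add]; abel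
    rw [hce]; exact u.sub_mem hwu hJd
  have hJc0 : J c = 0 := by
    have : J c ∈ u ⊓ u.map J := ⟨hJc_u, ⟨c, hk hc, rfl⟩⟩
    rwa [hudisj, Submodule.mem_bot] at this
  have hwJd : w = J d := by rw [← hvw, ← hcd, map_add, hJc0, zero_add]
  exact ⟨hwk, ⟨d, hd, hwJd.symm⟩⟩
end

section
/- Assume u carries an invariant inner product ⟨·,·⟩ (i.e., ⟨[ξ,η₁],η₂⟩ = −⟨η₁,[ξ,η₂]⟩ for all ξ, η₁, η₂ ∈ u), and assume that both g ∩ ig and g + ig are ideals of L (viewed as a real Lie algebra). Set u₁ := k ∩ ip, let u₁^⊥ be the orthogonal complement of u₁ inside u, and set k₀ := k ∩ u₁^⊥ and p₀ := p ∩ i·(u₁^⊥). Then the sum u₀ := k₀ + i·p₀ is direct (k₀ ∩ i·p₀ = 0) and u₀ is an ideal of the real Lie algebra u. -/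
/-!
Because `u ∩ i·u = 0` while `k, i·p ⊆ u` and `p, i·k ⊆ i·u`, the modular law gives
`g ∩ i·g ∩ u = k ∩ i·p = u₁` and `(g + i·g) ∩ u = k + i·p`; as intersections of ideals of `L`
with the subalgebra `u`, both are ideals of `u`. Invariance of the inner product makes `u₁^⊥`
an ideal of `u` as well, and positivity gives `u = u₁ ⊕ u₁^⊥` in finite dimension. Since `u₁`
lies in both `k` and `i·p`, the modular law then yields `u₀ = (k + i·p) ∩ u₁^⊥`, an
intersection of ideals, while `k₀ ∩ i·p₀ ⊆ u₁ ∩ u₁^⊥ = 0`.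
-/

section ModularLattice

variable {α : Type*} [Lattice α] [OrderBot α] [IsModularLattice α]

theorem sup_inf_eq_left_of_disjoint {x y v w : α} (hx : x ≤ v) (hy : y ≤ w)
    (hvw : Disjoint v w) : (x ⊔ y) ⊓ v = x := by
  rw [sup_inf_assoc_of_le y hx, (hvw.mono_right hy).symm.eq_bot, sup_bot_eq]

theorem sup_inf_eq_inf_sup_inf_of_le_sup {a c q r : α} (hqa : q ≤ a) (hqc : q ≤ c)
    (ha : a ≤ q ⊔ r) (hc : c ≤ q ⊔ r) (hqr : Disjoint q r) :
    (a ⊔ c) ⊓ r = a ⊓ r ⊔ c ⊓ r := by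
  have split {b : α} (hqb : q ≤ b) (hb : b ≤ q ⊔ r) : b = q ⊔ b ⊓ r := by
    rw [inf_comm, ← sup_inf_assoc_of_le r hqb, inf_eq_right.mpr hb]
  calc (a ⊔ c) ⊓ r = (a ⊓ r ⊔ c ⊓ r ⊔ q) ⊓ r := by
        conv_lhs => rw [split hqa ha, split hqc hc]
        rw [sup_sup_sup_comm, sup_idem, sup_comm]
    _ = a ⊓ r ⊔ c ⊓ r := by
        rw [sup_inf_assoc_of_le q (sup_le inf_le_right inf_le_right), hqr.eq_bot, sup_bot_eq]

end ModularLattice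

namespace Submodule

section ComplexStructure

variable {V : Type*} [AddCommGroup V] [Module ℝ V] {J : V →ₗ[ℝ] V}

theorem map_map_eq_self_of_apply_apply_eq_neg (hJ : ∀ x, J (J x) = -x) (S : Submodule ℝ V) :
    (S.map J).map J = S := by
  rw [← map_comp, show J ∘ₗ J = -LinearMap.id from LinearMap.ext hJ, Submodule.map_neg, map_id]

theorem map_inf_map_eq_of_apply_apply_eq_neg (hJ : ∀ x, J (J x) = -x) (S T : Submodule ℝ V) :
    (S ⊓ T.map J).map J = S.map J ⊓ T := by
  have hinj : Function.Injective J := fun x y hxy => by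
    simpa [hJ] using congrArg J hxy
  rw [map_inf J hinj, map_map_eq_self_of_apply_apply_eq_neg hJ]

variable {u k p : Submodule ℝ V}

theorem map_le_of_le_map (hJ : ∀ x, J (J x) = -x) (hp : p ≤ u.map J) : p.map J ≤ u :=
  map_map_eq_self_of_apply_apply_eq_neg hJ u ▸ map_mono hp

theorem sup_inf_map_sup_inf_eq (hJ : ∀ x, J (J x) = -x) (hudisj : Disjoint u (u.map J))
    (hk : k ≤ u) (hp : p ≤ u.map J) :
    (k ⊔ p) ⊓ (k ⊔ p).map J ⊓ u = k ⊓ p.map J := by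
  have hJp : p.map J ≤ u := map_le_of_le_map hJ hp
  have hJg : (k ⊔ p).map J ⊓ u = p.map J := by
    rw [map_sup, sup_comm]
    exact sup_inf_eq_left_of_disjoint hJp (map_mono hk) hudisj
  rw [inf_inf_distrib_right, sup_inf_eq_left_of_disjoint hk hp hudisj, hJg]

theorem sup_sup_map_sup_inf_eq (hJ : ∀ x, J (J x) = -x) (hudisj : Disjoint u (u.map J))
    (hk : k ≤ u) (hp : p ≤ u.map J) :
    ((k ⊔ p) ⊔ (k ⊔ p).map J) ⊓ u = k ⊔ p.map J := by
  have hJp : p.map J ≤ u := map_le_of_le_map hJ hp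
  rw [map_sup, show k ⊔ p ⊔ (k.map J ⊔ p.map J) = k ⊔ p.map J ⊔ (p ⊔ k.map J) by ac_rfl]
  exact sup_inf_eq_left_of_disjoint (sup_le hk hJp) (sup_le hp (map_mono hk)) hudisj

end ComplexStructure

section Orthogonal

variable {V : Type*} [AddCommGroup V] [Module ℝ V] (B : V →ₗ[ℝ] V →ₗ[ℝ] ℝ)

def orthogonalIn (u Q : Submodule ℝ V) : Submodule ℝ V :=
  u ⊓ ⨅ y ∈ Q, LinearMap.ker (B.flip y)

variable {B} {u Q : Submodule ℝ V}

theorem mem_orthogonalIn {x : V} : x ∈ orthogonalIn B u Q ↔ x ∈ u ∧ ∀ y ∈ Q, B x y = 0 := by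
  simp only [orthogonalIn, mem_inf, mem_iInf, LinearMap.mem_ker, LinearMap.flip_apply]

theorem disjoint_orthogonalIn (hB : ∀ x ∈ u, x ≠ 0 → 0 < B x x) :
    Disjoint Q (orthogonalIn B u Q) := by
  refine disjoint_def.mpr fun x hxQ hx => ?_
  obtain ⟨hxu, hxperp⟩ := mem_orthogonalIn.mp hx
  by_contra hne
  exact (hB x hxu hne).ne' (hxperp x hxQ)

theorem le_sup_orthogonalIn [FiniteDimensional ℝ V] (hB : ∀ x ∈ u, x ≠ 0 → 0 < B x x)
    (hQ : Q ≤ u) : u ≤ Q ⊔ orthogonalIn B u Q := by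
  let BQ : LinearMap.BilinForm ℝ Q := B.compl₁₂ Q.subtype Q.subtype
  have hBQ (y : Q) (h : BQ y y = 0) : y = 0 := by
    by_contra hne
    exact (hB y (hQ y.2) (by simpa using hne)).ne' h
  have hnd : BQ.Nondegenerate := ⟨fun y hy => hBQ y (hy y), fun y hy => hBQ y (hy y)⟩
  intro x hx
  -- the component of `x` in `Q` represents the functional `B x` restricted to `Q`
  let q : Q := (BQ.toDual hnd).symm (B x ∘ₗ Q.subtype)
  have hq (y : Q) : B q y = B x y := LinearMap.BilinForm.apply_toDual_symm_apply (B := BQ) _ y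
  refine mem_sup.mpr ⟨q, q.2, x - q, mem_orthogonalIn.mpr ⟨sub_mem hx (hQ q.2), ?_⟩, by abel⟩
  intro y hy
  rw [map_sub, LinearMap.sub_apply, hq ⟨y, hy⟩, sub_self]

end Orthogonal

section Lie

variable {V : Type*} [LieRing V] [Module ℝ V] {B : V →ₗ[ℝ] V →ₗ[ℝ] ℝ} {u Q : Submodule ℝ V}

theorem lie_mem_orthogonalIn (hu : ∀ x ∈ u, ∀ y ∈ u, ⁅x, y⁆ ∈ u)
    (hB : ∀ ξ ∈ u, ∀ η₁ ∈ u, ∀ η₂ ∈ u, B ⁅ξ, η₁⁆ η₂ = - B η₁ ⁅ξ, η₂⁆)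
    (hQ : Q ≤ u) (hQu : ∀ x ∈ u, ∀ y ∈ Q, ⁅x, y⁆ ∈ Q) :
    ∀ x ∈ u, ∀ y ∈ orthogonalIn B u Q, ⁅x, y⁆ ∈ orthogonalIn B u Q := by
  intro x hx y hy
  obtain ⟨hyu, hyperp⟩ := mem_orthogonalIn.mp hy
  refine mem_orthogonalIn.mpr ⟨hu x hx y hyu, fun w hw => ?_⟩
  rw [hB x hx y hyu w (hQ hw), hyperp _ (hQu x hx w hw), neg_zero]

theorem lie_mem_inf_of_lie_mem {S : Submodule ℝ V}
    (hu : ∀ x ∈ u, ∀ y ∈ u, ⁅x, y⁆ ∈ u) (hS : ∀ x : V, ∀ y ∈ S, ⁅x, y⁆ ∈ S) :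
    ∀ x ∈ u, ∀ y ∈ S ⊓ u, ⁅x, y⁆ ∈ S ⊓ u :=
  fun x hx y hy => ⟨hS x y hy.1, hu x hx y hy.2⟩

end Lie

end Submodule

theorem u_zero_direct_and_isIdeal_general
    {L : Type*} [LieRing L] [LieAlgebra ℂ L] [FiniteDimensional ℂ L]
    [Module ℝ L] [IsScalarTower ℝ ℂ L]
    (J : L →ₗ[ℝ] L) (hJ : ∀ x : L, J x = Complex.I • x)
    (u k p : Submodule ℝ L)
    (hu : ∀ x ∈ u, ∀ y ∈ u, ⁅x, y⁆ ∈ u)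
    (hudisj : u ⊓ u.map J = ⊥)
    (hk : k ≤ u) (hp : p ≤ u.map J)
    (B : L →ₗ[ℝ] L →ₗ[ℝ] ℝ)
    (hBpos : ∀ x ∈ u, x ≠ 0 → 0 < B x x)
    (hBinv : ∀ ξ ∈ u, ∀ η₁ ∈ u, ∀ η₂ ∈ u, B ⁅ξ, η₁⁆ η₂ = - B η₁ ⁅ξ, η₂⁆)
    (hideal₁ : ∀ x : L, ∀ y ∈ (k ⊔ p) ⊓ (k ⊔ p).map J,
      ⁅x, y⁆ ∈ (k ⊔ p) ⊓ (k ⊔ p).map J)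
    (hideal₂ : ∀ x : L, ∀ y ∈ (k ⊔ p) ⊔ ((k ⊔ p).map J),
      ⁅x, y⁆ ∈ (k ⊔ p) ⊔ ((k ⊔ p).map J)) :
    let u₁ : Submodule ℝ L := k ⊓ p.map J
    let u₁perp : Submodule ℝ L := u ⊓ ⨅ y ∈ u₁, LinearMap.ker (B.flip y)
    let k₀ : Submodule ℝ L := k ⊓ u₁perp
    let p₀ : Submodule ℝ L := p ⊓ u₁perp.map J
    let u₀ : Submodule ℝ L := k₀ ⊔ p₀.map J
    k₀ ⊓ p₀.map J = ⊥ ∧ u₀ ≤ u ∧ ∀ x ∈ u, ∀ y ∈ u₀, ⁅x, y⁆ ∈ u₀ := by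
  intro u₁ u₁perp k₀ p₀ u₀
  have hJJ (x : L) : J (J x) = -x := by
    rw [hJ, hJ, smul_smul, Complex.I_mul_I, neg_one_smul]
  have hdisj : Disjoint u (u.map J) := disjoint_iff.mpr hudisj
  have hJp : p.map J ≤ u := Submodule.map_le_of_le_map hJJ hp
  have hu₁_lie : ∀ x ∈ u, ∀ y ∈ u₁, ⁅x, y⁆ ∈ u₁ := by
    simpa only [Submodule.sup_inf_map_sup_inf_eq hJJ hdisj hk hp] using
      Submodule.lie_mem_inf_of_lie_mem hu hideal₁
  have hu₂_lie : ∀ x ∈ u, ∀ y ∈ k ⊔ p.map J, ⁅x, y⁆ ∈ k ⊔ p.map J := by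
    simpa only [Submodule.sup_sup_map_sup_inf_eq hJJ hdisj hk hp] using
      Submodule.lie_mem_inf_of_lie_mem hu hideal₂
  have hu₁u : u₁ ≤ u := inf_le_left.trans hk
  have hperp_lie : ∀ x ∈ u, ∀ y ∈ u₁perp, ⁅x, y⁆ ∈ u₁perp :=
    Submodule.lie_mem_orthogonalIn hu hBinv hu₁u hu₁_lie
  have : FiniteDimensional ℝ L := Module.Finite.trans ℂ L
  have hcompl : Disjoint u₁ u₁perp := Submodule.disjoint_orthogonalIn hBpos
  have hsup : u ≤ u₁ ⊔ u₁perp := Submodule.le_sup_orthogonalIn hBpos hu₁u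
  have hp₀ : p₀.map J = p.map J ⊓ u₁perp :=
    Submodule.map_inf_map_eq_of_apply_apply_eq_neg hJJ _ _
  have hu₀ : u₀ = (k ⊔ p.map J) ⊓ u₁perp := by
    rw [sup_inf_eq_inf_sup_inf_of_le_sup inf_le_left inf_le_right (hk.trans hsup)
      (hJp.trans hsup) hcompl, ← hp₀]
  refine ⟨?_, hu₀ ▸ inf_le_right.trans inf_le_left, ?_⟩
  · rw [hp₀, ← inf_inf_distrib_right]
    exact hcompl.eq_bot
  · rw [hu₀]
    exact fun x hx y hy => ⟨hu₂_lie x hx y hy.1, hperp_lie x hx y hy.2⟩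

/-- Setting of compatible subalgebras: `L` a finite-dimensional complex Lie algebra,
`u` a real subalgebra with `L = u ⊕ i·u`, `k ⊆ u`, `p ⊆ i·u` real subspaces with
`g := k + p` a real Lie subalgebra, `B` an invariant inner product on `u`, and
`g ∩ i·g`, `g + i·g` ideals of `L`.  With `u₁ := k ∩ i·p`, `k₀ := k ∩ u₁ᗮ`,
`p₀ := p ∩ i·(u₁ᗮ)` (orthogonal complement taken inside `u`), the sum
`u₀ := k₀ + i·p₀` is direct and `u₀` is an ideal of the real Lie algebra `u`. -/
theorem u_zero_direct_and_isIdeal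
    {L : Type*} [LieRing L] [LieAlgebra ℂ L] [FiniteDimensional ℂ L]
    [Module ℝ L] [IsScalarTower ℝ ℂ L]
    (J : L →ₗ[ℝ] L) (hJ : ∀ x : L, J x = Complex.I • x)
    (u k p : Submodule ℝ L)
    (hu : ∀ x ∈ u, ∀ y ∈ u, ⁅x, y⁆ ∈ u)
    (huspan : u ⊔ u.map J = ⊤) (hudisj : u ⊓ u.map J = ⊥)
    (hk : k ≤ u) (hp : p ≤ u.map J)
    (hg : ∀ x ∈ k ⊔ p, ∀ y ∈ k ⊔ p, ⁅x, y⁆ ∈ k ⊔ p)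
    (B : L →ₗ[ℝ] L →ₗ[ℝ] ℝ)
    (hBpos : ∀ x ∈ u, x ≠ 0 → 0 < B x x)
    (hBsymm : ∀ x ∈ u, ∀ y ∈ u, B x y = B y x)
    (hBinv : ∀ ξ ∈ u, ∀ η₁ ∈ u, ∀ η₂ ∈ u, B ⁅ξ, η₁⁆ η₂ = - B η₁ ⁅ξ, η₂⁆)
    (hideal₁ : ∀ x : L, ∀ y ∈ (k ⊔ p) ⊓ (k ⊔ p).map J,
      ⁅x, y⁆ ∈ (k ⊔ p) ⊓ (k ⊔ p).map J)
    (hideal₂ : ∀ x : L, ∀ y ∈ (k ⊔ p) ⊔ ((k ⊔ p).map J),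
      ⁅x, y⁆ ∈ (k ⊔ p) ⊔ ((k ⊔ p).map J)) :
    let u₁ : Submodule ℝ L := k ⊓ p.map J
    let u₁perp : Submodule ℝ L := u ⊓ ⨅ y ∈ u₁, LinearMap.ker (B.flip y)
    let k₀ : Submodule ℝ L := k ⊓ u₁perp
    let p₀ : Submodule ℝ L := p ⊓ u₁perp.map J
    let u₀ : Submodule ℝ L := k₀ ⊔ p₀.map J
    k₀ ⊓ p₀.map J = ⊥ ∧ u₀ ≤ u ∧ ∀ x ∈ u, ∀ y ∈ u₀, ⁅x, y⁆ ∈ u₀ :=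
  u_zero_direct_and_isIdeal_general J hJ u k p hu hudisj hk hp B hBpos hBinv hideal₁ hideal₂
end

section
/- Assume u carries an invariant inner product ⟨·,·⟩ (i.e., ⟨[ξ,η₁],η₂⟩ = −⟨η₁,[ξ,η₂]⟩ for all ξ, η₁, η₂ ∈ u), and assume that both g ∩ ig and g + ig are ideals of L (viewed as a real Lie algebra). Set u₁ := k ∩ ip, let u₁^⊥ be the orthogonal complement of u₁ inside u, and set k₀ := k ∩ u₁^⊥, p₀ := p ∩ i·(u₁^⊥), g₀ := k₀ + p₀ and u₀ := k₀ + i·p₀. Then: (1) u₁ and u₀ are ideals of the real Lie algebra u; (2) g decomposes as the direct sum g = g₀ ⊕ (u₁ + i·u₁); (3) g₀ is contained in u₀ + i·u₀, with k₀ ⊆ u₀, p₀ ⊆ i·u₀, and u₀ = k₀ ⊕ i·p₀ (i.e., g₀ is a compatible real form of the complexification of u₀). -/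
private lemma exists_proj_aux {E : Type*} [AddCommGroup E] [Module ℝ E]
    (B : E →ₗ[ℝ] E →ₗ[ℝ] ℝ) (W : Submodule ℝ E) [FiniteDimensional ℝ W]
    (hpos : ∀ x ∈ W, x ≠ 0 → 0 < B x x) (x : E) :
    ∃ y ∈ W, ∀ z ∈ W, B (x - y) z = 0 := by
  let b : LinearMap.BilinForm ℝ W := B.compl₁₂ W.subtype W.subtype
  have hnd : b.Nondegenerate := by
    refine ⟨fun m hm => ?_, fun m hm => ?_⟩
    all_goals
      by_contra h
      have h1 : (m : E) ≠ 0 := fun h0 => h (Subtype.ext h0)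
      have hlt := hpos m m.2 h1
      have h2 : b m m = 0 := hm m
      simp only [b, LinearMap.compl₁₂_apply, Submodule.coe_subtype] at h2
      rw [h2] at hlt; exact lt_irrefl 0 hlt
  let f : Module.Dual ℝ W := (B x).comp W.subtype
  obtain ⟨y, hy⟩ := (b.toDual hnd).surjective f
  refine ⟨y, y.2, fun z hz => ?_⟩
  have h3 : b y ⟨z, hz⟩ = f ⟨z, hz⟩ := by
    rw [← hy]; rfl
  simp only [b, f, LinearMap.compl₁₂_apply, Submodule.coe_subtype, LinearMap.comp_apply] at h3
  simp [map_sub, LinearMap.sub_apply, h3]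

/-- Structure of compatible Zariski-dense subalgebras (Lie algebra level):
`L` a finite-dimensional complex Lie algebra, `u` a real subalgebra with `L = u ⊕ i·u`,
`k ⊆ u`, `p ⊆ i·u` real subspaces with `g := k + p` a real Lie subalgebra, `B` an
invariant inner product on `u`, and `g ∩ i·g`, `g + i·g` ideals of `L`.  With
`u₁ := k ∩ i·p`, `k₀ := k ∩ u₁ᗮ`, `p₀ := p ∩ i·(u₁ᗮ)`, `g₀ := k₀ + p₀`,
`u₀ := k₀ + i·p₀` one has:
(1) `u₁` and `u₀` are ideals of the real Lie algebra `u`;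
(2) `g = g₀ ⊕ (u₁ + i·u₁)`;
(3) `g₀ ⊆ u₀ + i·u₀` with `k₀ ≤ u₀`, `p₀ ⊆ i·u₀` and `u₀ = k₀ ⊕ i·p₀`,
i.e. `g₀` is a compatible real form of the complexification of `u₀`. -/
theorem compatible_subalgebra_decomposition
    {L : Type*} [LieRing L] [LieAlgebra ℂ L] [FiniteDimensional ℂ L]
    [Module ℝ L] [IsScalarTower ℝ ℂ L]
    (J : L →ₗ[ℝ] L) (hJ : ∀ x : L, J x = Complex.I • x)
    (u k p : Submodule ℝ L)
    (hu : ∀ x ∈ u, ∀ y ∈ u, ⁅x, y⁆ ∈ u)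
    (huspan : u ⊔ u.map J = ⊤) (hudisj : u ⊓ u.map J = ⊥)
    (hk : k ≤ u) (hp : p ≤ u.map J)
    (hg : ∀ x ∈ k ⊔ p, ∀ y ∈ k ⊔ p, ⁅x, y⁆ ∈ k ⊔ p)
    (B : L →ₗ[ℝ] L →ₗ[ℝ] ℝ)
    (hBpos : ∀ x ∈ u, x ≠ 0 → 0 < B x x)
    (hBsymm : ∀ x ∈ u, ∀ y ∈ u, B x y = B y x)
    (hBinv : ∀ ξ ∈ u, ∀ η₁ ∈ u, ∀ η₂ ∈ u, B ⁅ξ, η₁⁆ η₂ = - B η₁ ⁅ξ, η₂⁆)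
    (hideal₁ : ∀ x : L, ∀ y ∈ (k ⊔ p) ⊓ (k ⊔ p).map J,
      ⁅x, y⁆ ∈ (k ⊔ p) ⊓ (k ⊔ p).map J)
    (hideal₂ : ∀ x : L, ∀ y ∈ (k ⊔ p) ⊔ ((k ⊔ p).map J),
      ⁅x, y⁆ ∈ (k ⊔ p) ⊔ ((k ⊔ p).map J)) :
    let u₁ : Submodule ℝ L := k ⊓ p.map J
    let u₁perp : Submodule ℝ L := u ⊓ ⨅ y ∈ u₁, LinearMap.ker (B.flip y)
    let k₀ : Submodule ℝ L := k ⊓ u₁perp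
    let p₀ : Submodule ℝ L := p ⊓ u₁perp.map J
    let g₀ : Submodule ℝ L := k₀ ⊔ p₀
    let u₀ : Submodule ℝ L := k₀ ⊔ p₀.map J
    -- (1) `u₁` and `u₀` are ideals of `u`
    ((u₁ ≤ u ∧ ∀ x ∈ u, ∀ y ∈ u₁, ⁅x, y⁆ ∈ u₁) ∧
      (u₀ ≤ u ∧ ∀ x ∈ u, ∀ y ∈ u₀, ⁅x, y⁆ ∈ u₀)) ∧
    -- (2) `g = g₀ ⊕ (u₁ + i·u₁)`
    (k ⊔ p = g₀ ⊔ (u₁ ⊔ u₁.map J) ∧ g₀ ⊓ (u₁ ⊔ u₁.map J) = ⊥) ∧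
    -- (3) `g₀` is a compatible real form of `u₀ + i·u₀`
    (g₀ ≤ u₀ ⊔ u₀.map J ∧ k₀ ≤ u₀ ∧ p₀ ≤ u₀.map J ∧
      u₀ = k₀ ⊔ p₀.map J ∧ k₀ ⊓ p₀.map J = ⊥) := by
  intro u₁ u₁perp k₀ p₀ g₀ u₀
  haveI : FiniteDimensional ℝ L := Module.Finite.trans ℂ L
  -- basic facts about J
  have hJJ : ∀ x : L, J (J x) = -x := by
    intro x
    rw [hJ, hJ, smul_smul, Complex.I_mul_I, neg_one_smul]
  have hJinj : Function.Injective J := fun a b h => by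
    have h2 := congrArg J h
    rw [hJJ, hJJ] at h2
    exact neg_injective h2
  have hJmem : ∀ (S : Submodule ℝ L) (x : L), x ∈ S → J x ∈ S.map J :=
    fun S x hx => Submodule.mem_map.mpr ⟨x, hx, rfl⟩
  have hJmem' : ∀ (S : Submodule ℝ L) (x : L), x ∈ S.map J → J x ∈ S := by
    intro S x hx
    obtain ⟨y, hy, rfl⟩ := Submodule.mem_map.mp hx
    rw [hJJ]
    exact S.neg_mem hy
  have hmm : ∀ S : Submodule ℝ L, (S.map J).map J = S := by
    intro S
    apply le_antisymm
    · rintro x hx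
      obtain ⟨y, hy, rfl⟩ := Submodule.mem_map.mp hx
      exact hJmem' S y hy
    · intro x hx
      exact Submodule.mem_map.mpr ⟨J (-x), hJmem S (-x) (S.neg_mem hx),
        by rw [hJJ, neg_neg]⟩
  -- cancellation in the direct sum u ⊕ J(u)
  have hcancel : ∀ a a' b b' : L, a ∈ u → a' ∈ u → b ∈ u.map J → b' ∈ u.map J →
      a + b = a' + b' → a = a' ∧ b = b' := by
    intro a a' b b' ha ha' hb hb' h
    have h1 : a - a' = b' - b := by
      rw [sub_eq_sub_iff_add_eq_add, h, add_comm]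
    have h2 : a - a' ∈ u ⊓ u.map J :=
      Submodule.mem_inf.mpr ⟨sub_mem ha ha', h1 ▸ sub_mem hb' hb⟩
    rw [hudisj] at h2
    have h3 : a - a' = 0 := (Submodule.mem_bot ℝ).mp h2
    have h4 : b' - b = 0 := h1 ▸ h3
    exact ⟨sub_eq_zero.mp h3, (sub_eq_zero.mp h4).symm⟩
  -- ideal of complexification implies ideal of u
  have hidealu : ∀ S : Submodule ℝ L, S ≤ u →
      (∀ x : L, ∀ y ∈ S ⊔ S.map J, ⁅x, y⁆ ∈ S ⊔ S.map J) →
      ∀ x ∈ u, ∀ y ∈ S, ⁅x, y⁆ ∈ S := by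
    intro S hSu hSid x hx y hy
    have h1 : ⁅x, y⁆ ∈ u := hu x hx y (hSu hy)
    obtain ⟨s, hs, t, ht, hst⟩ :=
      Submodule.mem_sup.mp (hSid x y (Submodule.mem_sup_left hy))
    have h2a : t ∈ u := by
      have h5 := sub_mem h1 (hSu hs)
      rwa [← hst, add_sub_cancel_left] at h5
    have h2 : t ∈ u ⊓ u.map J := Submodule.mem_inf.mpr ⟨h2a, Submodule.map_mono hSu ht⟩
    rw [hudisj] at h2
    have ht0 : t = 0 := (Submodule.mem_bot ℝ).mp h2
    rw [← hst, ht0, add_zero]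
    exact hs
  have hu₁u : u₁ ≤ u := inf_le_left.trans hk
  have hu₁k : u₁ ≤ k := inf_le_left
  have hu₁Jp : u₁.map J ≤ p := by
    rintro x hx
    obtain ⟨y, hy, rfl⟩ := Submodule.mem_map.mp hx
    exact hJmem' p y (Submodule.mem_inf.mp hy).2
  -- key identity: g ∩ J g = u₁ ⊕ J u₁
  have hC : (k ⊔ p) ⊓ (k ⊔ p).map J = u₁ ⊔ u₁.map J := by
    apply le_antisymm
    · intro x hx
      obtain ⟨hx1, hx2⟩ := Submodule.mem_inf.mp hx
      obtain ⟨a, ha, b, hb, hab⟩ := Submodule.mem_sup.mp hx1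
      obtain ⟨y, hy, hyx⟩ := Submodule.mem_map.mp hx2
      obtain ⟨a', ha', b', hb', hab'⟩ := Submodule.mem_sup.mp hy
      have hx' : a + b = J b' + J a' := by
        rw [hab, ← hyx, ← hab', map_add, add_comm]
      have hcc := hcancel a (J b') b (J a') (hk ha) (hJmem' u b' (hp hb'))
        (hp hb) (Submodule.mem_map.mpr ⟨a', hk ha', rfl⟩) hx'
      have hau : a ∈ u₁ :=
        Submodule.mem_inf.mpr ⟨ha, Submodule.mem_map.mpr ⟨b', hb', hcc.1.symm⟩⟩
      have ha'u : a' ∈ u₁ :=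
        Submodule.mem_inf.mpr ⟨ha', Submodule.mem_map.mpr ⟨-b, p.neg_mem hb,
          by rw [map_neg, hcc.2, hJJ, neg_neg]⟩⟩
      exact Submodule.mem_sup.mpr ⟨a, hau, b,
        Submodule.mem_map.mpr ⟨a', ha'u, hcc.2.symm⟩, hab⟩
    · apply sup_le
      · exact le_inf (hu₁k.trans le_sup_left)
          (le_trans inf_le_right (Submodule.map_mono le_sup_right))
      · exact le_inf (hu₁Jp.trans le_sup_right)
          (Submodule.map_mono (hu₁k.trans le_sup_left))
  -- u₁ is an ideal of u
  have hu₁ideal : ∀ x ∈ u, ∀ y ∈ u₁, ⁅x, y⁆ ∈ u₁ := by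
    have h := hideal₁
    rw [hC] at h
    exact hidealu u₁ hu₁u h
  -- orthogonal complement
  have hperp : ∀ x : L, x ∈ u₁perp ↔ x ∈ u ∧ ∀ y ∈ u₁, B x y = 0 := by
    intro x
    constructor
    · intro hx
      obtain ⟨h1, h2⟩ := Submodule.mem_inf.mp hx
      refine ⟨h1, fun y hy => ?_⟩
      have h3 := (Submodule.mem_iInf _).mp ((Submodule.mem_iInf _).mp h2 y) hy
      simpa using h3
    · rintro ⟨h1, h2⟩
      refine Submodule.mem_inf.mpr ⟨h1, (Submodule.mem_iInf _).mpr fun y =>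
        (Submodule.mem_iInf _).mpr fun hy => LinearMap.mem_ker.mpr ?_⟩
      simpa using h2 y hy
  have hperpu : u₁perp ≤ u := inf_le_left
  have hdisj₁ : ∀ x, x ∈ u₁ → x ∈ u₁perp → x = 0 := by
    intro x h1 h2
    by_contra h0
    have hlt := hBpos x (hu₁u h1) h0
    rw [((hperp x).mp h2).2 x h1] at hlt
    exact lt_irrefl 0 hlt
  have hproj : ∀ x ∈ u, ∃ y ∈ u₁, x - y ∈ u₁perp := by
    intro x hx
    obtain ⟨y, hy, hy2⟩ := exists_proj_aux B u₁ (fun z hz => hBpos z (hu₁u hz)) x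
    exact ⟨y, hy, (hperp _).mpr ⟨sub_mem hx (hu₁u hy), hy2⟩⟩
  -- u₁perp is an ideal of u
  have hperpideal : ∀ x ∈ u, ∀ z ∈ u₁perp, ⁅x, z⁆ ∈ u₁perp := by
    intro x hx z hz
    obtain ⟨hz1, hz2⟩ := (hperp z).mp hz
    refine (hperp _).mpr ⟨hu x hx z hz1, fun y hy => ?_⟩
    rw [hBinv x hx z hz1 y (hu₁u hy), hz2 ⁅x, y⁆ (hu₁ideal x hx y hy), neg_zero]
  -- decompositions of k and p
  have hkdec : k = u₁ ⊔ k₀ := by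
    apply le_antisymm
    · intro x hx
      obtain ⟨y, hy, hxy⟩ := hproj x (hk hx)
      exact Submodule.mem_sup.mpr ⟨y, hy, x - y,
        Submodule.mem_inf.mpr ⟨sub_mem hx (hu₁k hy), hxy⟩, by abel⟩
    · exact sup_le hu₁k inf_le_left
  have hpdec : p = u₁.map J ⊔ p₀ := by
    apply le_antisymm
    · intro x hx
      obtain ⟨c, hc, hcx⟩ := Submodule.mem_map.mp (hp hx)
      obtain ⟨y, hy, hcy⟩ := hproj c hc
      have hJy : J y ∈ u₁.map J := Submodule.mem_map.mpr ⟨y, hy, rfl⟩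
      refine Submodule.mem_sup.mpr ⟨J y, hJy, x - J y,
        Submodule.mem_inf.mpr ⟨sub_mem hx (hu₁Jp hJy), ?_⟩, by abel⟩
      exact Submodule.mem_map.mpr ⟨c - y, hcy, by rw [map_sub, hcx]⟩
    · exact sup_le hu₁Jp inf_le_left
  -- (2) the decomposition g = g₀ ⊕ (u₁ ⊕ J u₁)
  have hgdec : k ⊔ p = (k₀ ⊔ p₀) ⊔ (u₁ ⊔ u₁.map J) := by
    rw [hkdec, hpdec, sup_sup_sup_comm, sup_comm (u₁ ⊔ u₁.map J)]
  have hdisj₂ : (k₀ ⊔ p₀) ⊓ (u₁ ⊔ u₁.map J) = ⊥ := by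
    rw [eq_bot_iff]
    intro x hx
    obtain ⟨hx1, hx2⟩ := Submodule.mem_inf.mp hx
    obtain ⟨a, ha, b, hb, hab⟩ := Submodule.mem_sup.mp hx1
    obtain ⟨c, hc, e, he, hce⟩ := Submodule.mem_sup.mp hx2
    obtain ⟨d, hd, rfl⟩ := Submodule.mem_map.mp he
    have hau : a ∈ u := hk (Submodule.mem_inf.mp ha).1
    have hbmap : b ∈ u.map J := hp (Submodule.mem_inf.mp hb).1
    have heq : a + b = c + J d := by rw [hab, ← hce]
    obtain ⟨hac, hbd⟩ := hcancel a c b (J d) hau (hu₁u hc) hbmap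
      (Submodule.mem_map.mpr ⟨d, hu₁u hd, rfl⟩) heq
    have ha0 : a = 0 := hdisj₁ a (hac ▸ hc) (Submodule.mem_inf.mp ha).2
    obtain ⟨r, hr, hrb⟩ := Submodule.mem_map.mp (Submodule.mem_inf.mp hb).2
    have hrd : r = d := hJinj (by rw [hrb, hbd])
    have hd0 : d = 0 := hdisj₁ d hd (hrd ▸ hr)
    have hx0 : x = 0 := by rw [← hab, ha0, hbd, hd0, map_zero, add_zero]
    exact (Submodule.mem_bot ℝ).mpr hx0
  -- u₀
  have hp₀perp : p₀.map J ≤ u₁perp := by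
    rintro x hx
    obtain ⟨y, hy, rfl⟩ := Submodule.mem_map.mp hx
    obtain ⟨r, hr, hry⟩ := Submodule.mem_map.mp (Submodule.mem_inf.mp hy).2
    rw [← hry, hJJ]
    exact u₁perp.neg_mem hr
  have hu₀perp : k₀ ⊔ p₀.map J ≤ u₁perp := sup_le inf_le_right hp₀perp
  have hu₀u : k₀ ⊔ p₀.map J ≤ u := hu₀perp.trans hperpu
  have hwu : k ⊔ p.map J ≤ u := by
    apply sup_le hk
    rintro x hx
    obtain ⟨y, hy, rfl⟩ := Submodule.mem_map.mp hx
    exact hJmem' u y (hp hy)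
  have hw : (k ⊔ p) ⊔ (k ⊔ p).map J = (k ⊔ p.map J) ⊔ (k ⊔ p.map J).map J := by
    rw [Submodule.map_sup, Submodule.map_sup, hmm p, sup_sup_sup_comm,
      sup_sup_sup_comm k (p.map J), sup_comm p (p.map J)]
  have hwideal : ∀ x ∈ u, ∀ y ∈ k ⊔ p.map J, ⁅x, y⁆ ∈ k ⊔ p.map J := by
    have h := hideal₂
    rw [hw] at h
    exact hidealu _ hwu h
  have hu₀w : k₀ ⊔ p₀.map J ≤ k ⊔ p.map J :=
    sup_le (inf_le_left.trans le_sup_left)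
      ((Submodule.map_mono inf_le_left).trans le_sup_right)
  have hu₀eq : k₀ ⊔ p₀.map J = (k ⊔ p.map J) ⊓ u₁perp := by
    apply le_antisymm (le_inf hu₀w hu₀perp)
    intro x hx
    obtain ⟨hx1, hx2⟩ := Submodule.mem_inf.mp hx
    obtain ⟨a, ha, b, hb, hab⟩ := Submodule.mem_sup.mp hx1
    obtain ⟨q, hq, hqb⟩ := Submodule.mem_map.mp hb
    have ha' : a ∈ u₁ ⊔ k₀ := by rw [← hkdec]; exact ha
    have hq' : q ∈ u₁.map J ⊔ p₀ := by rw [← hpdec]; exact hq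
    obtain ⟨a₁, ha₁, a₀, ha₀, haa⟩ := Submodule.mem_sup.mp ha'
    obtain ⟨e, he, q₀, hq₀, hqq⟩ := Submodule.mem_sup.mp hq'
    obtain ⟨c₁, hc₁, rfl⟩ := Submodule.mem_map.mp he
    have hx0 : a₀ + J q₀ ∈ k₀ ⊔ p₀.map J :=
      Submodule.mem_sup.mpr ⟨a₀, ha₀, J q₀, Submodule.mem_map.mpr ⟨q₀, hq₀, rfl⟩, rfl⟩
    have hxeq : x = (a₁ - c₁) + (a₀ + J q₀) := by
      rw [← hab, ← haa, ← hqb, ← hqq, map_add, hJJ]; abel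
    have h1 : a₁ - c₁ ∈ u₁ := sub_mem ha₁ hc₁
    have h2 : a₁ - c₁ ∈ u₁perp := by
      have h3 : a₁ - c₁ = x - (a₀ + J q₀) := by rw [hxeq]; abel
      rw [h3]
      exact sub_mem hx2 (hu₀perp hx0)
    have h0 : a₁ - c₁ = 0 := hdisj₁ _ h1 h2
    rw [hxeq, h0, zero_add]
    exact hx0
  have hu₀ideal : ∀ x ∈ u, ∀ y ∈ k₀ ⊔ p₀.map J, ⁅x, y⁆ ∈ k₀ ⊔ p₀.map J := by
    intro x hx y hy
    rw [hu₀eq] at hy ⊢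
    obtain ⟨hy1, hy2⟩ := Submodule.mem_inf.mp hy
    exact Submodule.mem_inf.mpr ⟨hwideal x hx y hy1, hperpideal x hx y hy2⟩
  -- (3)
  have hp₀u₀J : p₀ ≤ (k₀ ⊔ p₀.map J).map J := by
    intro x hx
    have h1 : x ∈ (p₀.map J).map J := by rw [hmm]; exact hx
    exact Submodule.map_mono le_sup_right h1
  have hfinal : k₀ ⊓ p₀.map J = ⊥ := by
    rw [eq_bot_iff]
    intro x hx
    obtain ⟨hx1, hx2⟩ := Submodule.mem_inf.mp hx
    obtain ⟨q, hq, hqx⟩ := Submodule.mem_map.mp hx2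
    have hxu₁ : x ∈ u₁ := Submodule.mem_inf.mpr ⟨(Submodule.mem_inf.mp hx1).1,
      Submodule.mem_map.mpr ⟨q, (Submodule.mem_inf.mp hq).1, hqx⟩⟩
    exact (Submodule.mem_bot ℝ).mpr (hdisj₁ x hxu₁ (Submodule.mem_inf.mp hx1).2)
  exact ⟨⟨⟨hu₁u, hu₁ideal⟩, ⟨hu₀u, hu₀ideal⟩⟩, ⟨hgdec, hdisj₂⟩,
    ⟨sup_le (le_sup_left.trans le_sup_left) (hp₀u₀J.trans le_sup_right),
      le_sup_left, hp₀u₀J, rfl, hfinal⟩⟩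
end

section
/- Let V be a complex vector space and σ : V → V a conjugate-linear involution (σ is additive, σ(cv) = c̄·σ(v) for all c ∈ ℂ, and σ ∘ σ = id). Let F := {v ∈ V : σ(v) = v} be its real fixed-point subspace, and let K and P be real subspaces of V with K ⊆ F and P ⊆ F. If V = K + i·P and V = i·K + P (as sums of real subspaces), then K = P = F. -/
/-- Let `V` be a complex vector space and `σ` a conjugate-linear involution of `V`
with real fixed-point space `F`.  If `K, P` are real subspaces of `V` contained in `F`
such that `V = K + i·P` and `V = i·K + P`, then `K = P = F`. -/
theorem fixed_subspaces_eq_of_sum_eq_top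
    {V : Type*} [AddCommGroup V] [Module ℂ V] [Module ℝ V] [IsScalarTower ℝ ℂ V]
    (σ : V →ₛₗ[starRingEnd ℂ] V) (hσ : ∀ v : V, σ (σ v) = v)
    (J : V →ₗ[ℝ] V) (hJ : ∀ v : V, J v = Complex.I • v)
    (K P : Submodule ℝ V)
    (hK : ∀ x ∈ K, σ x = x) (hP : ∀ x ∈ P, σ x = x)
    (h₁ : K ⊔ P.map J = ⊤) (h₂ : K.map J ⊔ P = ⊤) :
    (K : Set V) = {v : V | σ v = v} ∧ (P : Set V) = {v : V | σ v = v} := by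
  have key : ∀ (A B : Submodule ℝ V), (∀ x ∈ A, σ x = x) → (∀ x ∈ B, σ x = x) →
      A ⊔ B.map J = ⊤ → (A : Set V) = {v : V | σ v = v} := by
    intro A B hA hB hsum
    ext v
    simp only [Set.mem_setOf_eq, SetLike.mem_coe]
    constructor
    · exact hA v
    · intro hv
      have : v ∈ A ⊔ B.map J := hsum ▸ Submodule.mem_top
      rcases Submodule.mem_sup.mp this with ⟨a, ha, jb, hjb, hab⟩
      rcases hjb with ⟨b, hb, rfl⟩
      rw [hJ] at hab
      have hσv : σ v = a - Complex.I • b := by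
        rw [← hab, map_add, hA a ha, σ.map_smulₛₗ, hB b hb, Complex.conj_I, neg_smul,
          sub_eq_add_neg]
      have hb0 : Complex.I • b = 0 := by
        have h1 : a + Complex.I • b = a - Complex.I • b := by
          rw [hab, ← hv, hσv]
        have h2 : Complex.I • b + Complex.I • b = 0 :=
          add_eq_zero_iff_eq_neg.mpr (add_right_injective a (h1.trans (sub_eq_add_neg a _)))
        apply smul_right_injective V (two_ne_zero (α := ℂ))
        show (2 : ℂ) • (Complex.I • b) = (2 : ℂ) • (0 : V)
        rw [smul_zero, two_smul]
        exact h2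
      have : b = 0 := by
        have := congrArg (fun x => (-Complex.I : ℂ) • x) hb0
        simpa [smul_smul] using this
      rw [this, smul_zero, add_zero] at hab
      rwa [← hab]
  refine ⟨key K P hK hP h₁, key P K hP hK ?_⟩
  rwa [sup_comm] at h₂
end

section
/- Let f : E → ℝ be differentiable with ∇f locally Lipschitz continuous. Let γ : (-∞, 0] → E satisfy γ'(t) = ∇f(γ(t)) for all t ≤ 0 (i.e., γ is an integral curve of the gradient vector field of f). Suppose (t_n) is a sequence with t_n → −∞ such that the limit z₁ := lim_{n→∞} γ(t_n) exists in E. Then z₁ is a critical point of f, i.e., ∇f(z₁) = 0. -/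
/-!
Along the flow, `F = f ∘ γ` has derivative `‖∇f (γ s)‖² ≥ 0`, so `F` is monotone and, since
`F (tₙ) → f z₁`, it tends to `f z₁` at `-∞`: the energy `F (tₙ + 1) - F (tₙ)` spent on
`[tₙ, tₙ + 1]` tends to `0`. By Cauchy–Schwarz the curve moves at most the square root of that
energy on an interval of length `1`, so for large `n` it stays on `[tₙ, tₙ + 1]` in a ball around
`z₁` where `‖∇f‖² > ‖∇f z₁‖² / 2`. The energy is then at least `‖∇f z₁‖² / 2`, so `∇f z₁ = 0`.
-/

open Set Filter Topology Metric

theorem Convex.mul_sub_le_image_sub_of_le_hasDerivAt {D : Set ℝ} (hD : Convex ℝ D)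
    {F F' : ℝ → ℝ} {C : ℝ} (hF : ∀ x ∈ D, HasDerivAt F (F' x) x) (hC : ∀ x ∈ D, C ≤ F' x)
    ⦃x y : ℝ⦄ (hx : x ∈ D) (hy : y ∈ D) (hxy : x ≤ y) : C * (y - x) ≤ F y - F x :=
  hD.mul_sub_le_image_sub_of_le_deriv (fun z hz => (hF z hz).continuousAt.continuousWithinAt)
    (fun z hz => (hF z (interior_subset hz)).differentiableAt.differentiableWithinAt)
    (fun z hz => (hF z (interior_subset hz)).deriv ▸ hC z (interior_subset hz)) x hx y hy hxy

theorem Convex.monotoneOn_of_hasDerivAt_nonneg {D : Set ℝ} (hD : Convex ℝ D)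
    {F F' : ℝ → ℝ} (hF : ∀ x ∈ D, HasDerivAt F (F' x) x) (hF' : ∀ x ∈ D, 0 ≤ F' x) :
    MonotoneOn F D := fun x hx y hy hxy => by
  simpa using hD.mul_sub_le_image_sub_of_le_hasDerivAt hF hF' hx hy hxy

theorem MonotoneOn.tendsto_atBot_of_tendsto_comp {α β ι : Type*} [LinearOrder α]
    [LinearOrder β] [TopologicalSpace β] [OrderTopology β] {F : α → β} {x₀ : α} {L : β}
    (hF : MonotoneOn F (Iic x₀)) {l : Filter ι} [l.NeBot] {t : ι → α}
    (ht : Tendsto t l atBot) (hFt : Tendsto (F ∘ t) l (𝓝 L)) : Tendsto F atBot (𝓝 L) := by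
  refine tendsto_order.2 ⟨fun c hc => ?_, fun c hc => ?_⟩
  · have hL : ∀ s ≤ x₀, L ≤ F s := fun s hs => le_of_tendsto hFt <|
      (ht.eventually (eventually_le_atBot s)).mono fun i hi => hF (hi.trans hs) hs hi
    filter_upwards [eventually_le_atBot x₀] with s hs using hc.trans_le (hL s hs)
  · obtain ⟨i, hi, hix⟩ :=
      ((hFt.eventually (gt_mem_nhds hc)).and (ht.eventually (eventually_le_atBot x₀))).exists
    filter_upwards [eventually_le_atBot (t i)] with s hs using (hF (hs.trans hix) hix hs).trans_lt hi

section EnergyEstimate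

variable {E : Type*} [NormedAddCommGroup E] [NormedSpace ℝ E]

theorem norm_sub_sq_le_mul_sub_of_hasDerivAt {γ v : ℝ → E} {F : ℝ → ℝ} {a b : ℝ} (hab : a ≤ b)
    (hγ : ∀ u ∈ Icc a b, HasDerivAt γ (v u) u) (hF : ∀ u ∈ Icc a b, HasDerivAt F (‖v u‖ ^ 2) u) :
    ‖γ b - γ a‖ ^ 2 ≤ (b - a) * (F b - F a) := by
  -- Cauchy–Schwarz without integrals: AM-GM `2‖v‖ ≤ l + ‖v‖² / l` for each `l > 0`, and below
  -- the choice `l = ‖γ b - γ a‖ / (b - a)`.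
  have hbound : ∀ l > 0, 2 * ‖γ b - γ a‖ ≤ l * (b - a) + (F b - F a) / l := by
    intro l hl
    have hfence := image_norm_le_of_norm_deriv_right_le_deriv_boundary'
      (f := fun u => γ u - γ a) (B := fun u => (l * (u - a) + (F u - F a) / l) / 2)
      (B' := fun u => (l + ‖v u‖ ^ 2 / l) / 2)
      (fun u hu => ((hγ u hu).continuousAt.sub continuousAt_const).continuousWithinAt)
      (fun u hu => ((hγ u (Ico_subset_Icc_self hu)).sub_const (γ a)).hasDerivWithinAt)
      (by simp) (fun u hu => ?_) (fun u hu => ?_) (fun u hu => ?_) (right_mem_Icc.2 hab)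
    · linarith [hfence]
    · exact (((continuousAt_const.mul (continuousAt_id.sub continuousAt_const)).add
        (((hF u hu).continuousAt.sub continuousAt_const).div_const l)).div_const 2).continuousWithinAt
    · exact ((((hasDerivAt_id' u).sub_const a).const_mul l).add
        (((hF u (Ico_subset_Icc_self hu)).sub_const (F a)).div_const l)).div_const 2
        |>.congr_deriv (by ring) |>.hasDerivWithinAt
    · have hsq : l + ‖v u‖ ^ 2 / l - ‖v u‖ * 2 = (‖v u‖ - l) ^ 2 / l := by
        field_simp
        ring
      rw [le_div_iff₀ two_pos, ← sub_nonneg, hsq]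
      positivity
  have hE : 0 ≤ F b - F a := sub_nonneg.2 <|
    (convex_Icc a b).monotoneOn_of_hasDerivAt_nonneg hF (fun _ _ => sq_nonneg _)
      (left_mem_Icc.2 hab) (right_mem_Icc.2 hab) hab
  rcases hab.eq_or_lt with rfl | hab
  · simp
  rcases (norm_nonneg (γ b - γ a)).eq_or_lt with hd | hd
  · rw [← hd, sq, zero_mul]; exact mul_nonneg (sub_nonneg.2 hab.le) hE
  have hopt := hbound (‖γ b - γ a‖ / (b - a)) (by positivity)
  rw [div_mul_cancel₀ _ (sub_pos.2 hab).ne', div_div_eq_mul_div] at hopt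
  have h : ‖γ b - γ a‖ ≤ (F b - F a) * (b - a) / ‖γ b - γ a‖ := by linarith
  rw [le_div_iff₀ hd] at h
  linarith

theorem mapsTo_Icc_ball_of_mul_sub_lt_sq {γ v : ℝ → E} {F : ℝ → ℝ} {a b r : ℝ}
    (hγ : ∀ u ∈ Icc a b, HasDerivAt γ (v u) u) (hF : ∀ u ∈ Icc a b, HasDerivAt F (‖v u‖ ^ 2) u)
    (hr : 0 ≤ r) (hE : (b - a) * (F b - F a) < r ^ 2) : MapsTo γ (Icc a b) (ball (γ a) r) := by
  intro u hu
  have hFmono : MonotoneOn F (Icc a b) :=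
    (convex_Icc a b).monotoneOn_of_hasDerivAt_nonneg hF fun _ _ => sq_nonneg _
  have hsub : Icc a u ⊆ Icc a b := Icc_subset_Icc_right hu.2
  have hsq : ‖γ u - γ a‖ ^ 2 < r ^ 2 := calc
    ‖γ u - γ a‖ ^ 2 ≤ (u - a) * (F u - F a) :=
      norm_sub_sq_le_mul_sub_of_hasDerivAt hu.1 (fun s hs => hγ s (hsub hs))
        (fun s hs => hF s (hsub hs))
    _ ≤ (b - a) * (F b - F a) := by
      have ha : a ∈ Icc a b := left_mem_Icc.2 (hu.1.trans hu.2)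
      have hb : b ∈ Icc a b := right_mem_Icc.2 (hu.1.trans hu.2)
      exact mul_le_mul (by linarith [hu.2]) (by linarith [hFmono hu hb hu.2])
        (sub_nonneg.2 (hFmono ha hu hu.1)) (by linarith [hu.1, hu.2])
    _ < r ^ 2 := hE
  rw [mem_ball, dist_eq_norm]
  exact (pow_lt_pow_iff_left₀ (norm_nonneg _) hr two_ne_zero).1 hsq

theorem mul_sub_le_sub_of_le_norm_sq_on_ball {γ v : ℝ → E} {F : ℝ → ℝ} {a b κ ρ : ℝ} {z : E}
    (hab : a ≤ b) (hγ : ∀ u ∈ Icc a b, HasDerivAt γ (v u) u)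
    (hF : ∀ u ∈ Icc a b, HasDerivAt F (‖v u‖ ^ 2) u)
    (hv : ∀ u ∈ Icc a b, γ u ∈ ball z ρ → κ ≤ ‖v u‖ ^ 2) (ha : γ a ∈ ball z (ρ / 2))
    (hE : (b - a) * (F b - F a) < (ρ / 2) ^ 2) : κ * (b - a) ≤ F b - F a := by
  have hρ : 0 ≤ ρ / 2 := (dist_nonneg.trans_lt (mem_ball.1 ha)).le
  have hstay : MapsTo γ (Icc a b) (ball z ρ) :=
    (mapsTo_Icc_ball_of_mul_sub_lt_sq hγ hF hρ hE).mono_right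
      (ball_subset_ball' (by linarith [mem_ball.1 ha]))
  exact (convex_Icc a b).mul_sub_le_image_sub_of_le_hasDerivAt hF
    (fun u hu => hv u hu (hstay hu)) (left_mem_Icc.2 hab) (right_mem_Icc.2 hab) hab

end EnergyEstimate

theorem HasGradientAt.comp_hasDerivAt {E : Type*} [NormedAddCommGroup E] [InnerProductSpace ℝ E]
    [CompleteSpace E] {f : E → ℝ} {g v : E} {γ : ℝ → E} {t : ℝ}
    (hf : HasGradientAt f g (γ t)) (hγ : HasDerivAt γ v t) :
    HasDerivAt (f ∘ γ) (inner ℝ g v) t := by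
  simpa using hf.hasFDerivAt.comp_hasDerivAt t hγ

/-- Subsequential limits at `t → -∞` of a negative-time integral curve of the
gradient vector field of `f` (with locally Lipschitz gradient) are critical
points of `f`. -/
theorem gradient_eq_zero_of_tendsto_gradient_flow
    {E : Type*} [NormedAddCommGroup E] [InnerProductSpace ℝ E] [CompleteSpace E]
    (f : E → ℝ) (hf : Differentiable ℝ f)
    (hlip : LocallyLipschitz (gradient f))
    (γ : ℝ → E) (hγ : ∀ t : ℝ, t ≤ 0 → HasDerivAt γ (gradient f (γ t)) t)
    (t : ℕ → ℝ) (ht : Filter.Tendsto t Filter.atTop Filter.atBot)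
    (z₁ : E) (hz : Filter.Tendsto (fun n => γ (t n)) Filter.atTop (nhds z₁)) :
    gradient f z₁ = 0 := by
  set F := f ∘ γ
  have hF : ∀ s ∈ Iic (0 : ℝ), HasDerivAt F (‖gradient f (γ s)‖ ^ 2) s := fun s hs => by
    simpa using (hf (γ s)).hasGradientAt.comp_hasDerivAt (hγ s hs)
  have hFmono : MonotoneOn F (Iic 0) :=
    (convex_Iic 0).monotoneOn_of_hasDerivAt_nonneg hF fun _ _ => sq_nonneg _
  have hFlim : Tendsto F atBot (𝓝 (f z₁)) :=
    hFmono.tendsto_atBot_of_tendsto_comp ht ((hf.continuous.tendsto z₁).comp hz)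
  have hFinc : Tendsto (fun n => F (t n + 1) - F (t n)) atTop (𝓝 0) := by
    simpa using (hFlim.comp (tendsto_atBot_add_const_right _ 1 ht)).sub (hFlim.comp ht)
  by_contra hne
  set κ := ‖gradient f z₁‖ ^ 2
  have hκ : 0 < κ := by positivity
  obtain ⟨ρ, hρ, hgrad⟩ : ∃ ρ > 0, ∀ x ∈ ball z₁ ρ, κ / 2 < ‖gradient f x‖ ^ 2 :=
    Metric.eventually_nhds_iff_ball.1 <|
      ((hlip.continuous.norm.pow 2).tendsto z₁).eventually_const_lt (half_lt_self hκ)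
  obtain ⟨n, hn0, hnz, hnF⟩ : ∃ n, t n ≤ -1 ∧ γ (t n) ∈ ball z₁ (ρ / 2) ∧
      F (t n + 1) - F (t n) < min (κ / 2) ((ρ / 2) ^ 2) :=
    ((ht.eventually (eventually_le_atBot (-1))).and
      ((hz.eventually (ball_mem_nhds _ (half_pos hρ))).and
        (hFinc.eventually (gt_mem_nhds (lt_min (half_pos hκ) (by positivity)))))).exists
  have hIcc : Icc (t n) (t n + 1) ⊆ Iic 0 := fun u hu => hu.2.trans (by linarith)
  have hgrowth : κ / 2 * (t n + 1 - t n) ≤ F (t n + 1) - F (t n) :=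
    mul_sub_le_sub_of_le_norm_sq_on_ball (by linarith) (fun u hu => hγ u (hIcc hu))
      (fun u hu => hF u (hIcc hu)) (fun _ _ hu => (hgrad _ hu).le) hnz
      (by linarith [min_le_right (κ / 2) ((ρ / 2) ^ 2)])
  linarith [min_le_left (κ / 2) ((ρ / 2) ^ 2)]
end
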